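/- arXiv:1311.6426 — 4 statements merged into one kernel-verified Lean document; each statement's English description precedes it below -/
import Mathlib

section
/- Let G be a finite simple graph on a vertex type V and H a finite simple graph on a vertex type W, and let G ∨ H denote their join: the simple graph on the sum type V ⊕ W in which two vertices are adjacent if and only if they are both in V and adjacent in G, or both in W and adjacent in H, or one lies in V and the other in W. Then σ(G ∨ H, x) = σ(G, x) · σ(H, x). -/
open Polynomial

/-- `numIndepPartitions G i` is the number of partitions of the vertex set of `G` into
exactly `i` nonempty independent sets, encoded as the number of setoids (equivalence
relations) on `V` with exactly `i` equivalence classes, each class being an independent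
set of `G`. -/
noncomputable def numIndepPartitions {V : Type*} (G : SimpleGraph V) (i : ℕ) : ℕ :=
  Nat.card {P : Setoid V // Nat.card (Quotient P) = i ∧
    ∀ c ∈ P.classes, c.Pairwise fun u v => ¬ G.Adj u v}

/-- The σ-polynomial of a finite simple graph `G`: `σ(G,x) = ∑ aᵢ xⁱ` where `aᵢ` is the
number of partitions of the vertex set of `G` into `i` nonempty independent sets. -/
noncomputable def sigmaPoly {V : Type*} [Finite V] (G : SimpleGraph V) : Polynomial ℝ :=
  ∑ i ∈ Finset.range (Nat.card V + 1), (numIndepPartitions G i : ℝ) • X ^ i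


/-- The join of two simple graphs: vertices from both sides, keeping all edges and
adding all edges between the two sides. -/
def graphJoin {V W : Type*} (G : SimpleGraph V) (H : SimpleGraph W) : SimpleGraph (V ⊕ W) where
  Adj a b :=
    match a, b with
    | Sum.inl u, Sum.inl v => G.Adj u v
    | Sum.inr u, Sum.inr v => H.Adj u v
    | Sum.inl _, Sum.inr _ => True
    | Sum.inr _, Sum.inl _ => True
  symm := ⟨by rintro (u | u) (v | v) h <;> simp_all [SimpleGraph.adj_comm]⟩
  loopless := ⟨by rintro (u | u) h <;> simp_all⟩

/-! An independent partition of the join `G ∨ H` never puts a vertex of `G` and a vertex of `H`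
in the same block, since they are adjacent; so it is the disjoint union of an independent
partition of `G` and one of `H`, and its number of blocks is the sum of theirs. Writing
`σ(G, x) = ∑_P x^{#blocks of P}` over independent partitions `P`, the sum over pairs factors. -/

instance Setoid.instFinite {V : Type*} [Finite V] : Finite (Setoid V) :=
  Finite.of_injective (fun P => P.r) fun _ _ h =>
    Setoid.ext fun x y => iff_of_eq (congrFun₂ h x y)

theorem Setoid.forall_classes_pairwise_iff {V : Type*} (P : Setoid V) (R : V → V → Prop) :
    (∀ c ∈ P.classes, c.Pairwise R) ↔ ∀ u v, P u v → u ≠ v → R u v := by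
  constructor
  · intro h u v huv hne
    obtain ⟨c, hc, hu, hv⟩ := P.rel_iff_exists_classes.mp huv
    exact h c hc hu hv hne
  · rintro h c ⟨w, rfl⟩ u hu v hv hne
    exact h u v (P.trans' hu (P.symm' hv)) hne

def Setoid.sum {V W : Type*} (P : Setoid V) (Q : Setoid W) : Setoid (V ⊕ W) where
  r := Sum.LiftRel P Q
  iseqv :=
    { refl := fun
        | .inl u => .inl (P.refl u)
        | .inr w => .inr (Q.refl w)
      symm := fun
        | .inl h => .inl (P.symm h)
        | .inr h => .inr (Q.symm h)
      trans := fun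
        | .inl h, .inl h' => .inl (P.trans h h')
        | .inr h, .inr h' => .inr (Q.trans h h') }

def Setoid.quotientSumEquiv {V W : Type*} (P : Setoid V) (Q : Setoid W) :
    Quotient (P.sum Q) ≃ Quotient P ⊕ Quotient Q where
  toFun := Quotient.lift (Sum.map (Quotient.mk P) (Quotient.mk Q)) fun
    | _, _, .inl h => congrArg Sum.inl (Quotient.sound h)
    | _, _, .inr h => congrArg Sum.inr (Quotient.sound h)
  invFun := Sum.elim
    (Quotient.lift (fun v => Quotient.mk (P.sum Q) (.inl v)) fun _ _ h => Quotient.sound (.inl h))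
    (Quotient.lift (fun w => Quotient.mk (P.sum Q) (.inr w)) fun _ _ h => Quotient.sound (.inr h))
  left_inv := by rintro ⟨u | w⟩ <;> rfl
  right_inv := by rintro (q | q) <;> induction q using Quotient.ind <;> rfl

theorem Setoid.card_quotient_sum {V W : Type*} [Finite V] [Finite W]
    (P : Setoid V) (Q : Setoid W) :
    Nat.card (Quotient (P.sum Q)) = Nat.card (Quotient P) + Nat.card (Quotient Q) := by
  rw [Nat.card_congr (P.quotientSumEquiv Q), Nat.card_sum]

namespace SimpleGraph

variable {V W : Type*}

abbrev IndepSetoid (G : SimpleGraph V) : Type _ := {P : Setoid V // ∀ u v, P u v → ¬ G.Adj u v}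

theorem numIndepPartitions_eq_card (G : SimpleGraph V) (i : ℕ) :
    numIndepPartitions G i = Nat.card {P : G.IndepSetoid // Nat.card (Quotient P.1) = i} := by
  refine Nat.card_congr <| (Equiv.subtypeEquivRight fun P => ?_).trans
    (Equiv.subtypeSubtypeEquivSubtypeInter _ (fun P : Setoid V => Nat.card (Quotient P) = i)).symm
  rw [and_comm, P.forall_classes_pairwise_iff]
  exact and_congr_left' <| forall₂_congr fun u v =>
    imp_congr_right fun _ => ⟨fun h hadj => h hadj.ne hadj, fun h _ => h⟩

theorem sigmaPoly_eq_sum [Finite V] (G : SimpleGraph V) [Fintype G.IndepSetoid] :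
    sigmaPoly G = ∑ P : G.IndepSetoid, X ^ Nat.card (Quotient P.1) := by
  classical
  have card_quotient_le (P : G.IndepSetoid) : Nat.card (Quotient P.1) ≤ Nat.card V :=
    Nat.card_le_card_of_surjective _ Quotient.mk_surjective
  rw [sigmaPoly, ← Finset.sum_fiberwise_of_maps_to (g := fun P : G.IndepSetoid =>
    Nat.card (Quotient P.1)) (t := Finset.range (Nat.card V + 1))
    fun P _ => Finset.mem_range_succ_iff.mpr (card_quotient_le P)]
  refine Finset.sum_congr rfl fun i _ => ?_
  rw [Finset.sum_congr rfl fun P hP => by rw [(Finset.mem_filter.mp hP).2], Finset.sum_const,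
    numIndepPartitions_eq_card, Nat.card_eq_fintype_card, Fintype.card_subtype,
    Nat.cast_smul_eq_nsmul]

def joinIndepSetoidEquiv (G : SimpleGraph V) (H : SimpleGraph W) :
    G.IndepSetoid × H.IndepSetoid ≃ (graphJoin G H).IndepSetoid where
  toFun PQ := ⟨PQ.1.1.sum PQ.2.1, fun
    | _, _, .inl h => PQ.1.2 _ _ h
    | _, _, .inr h => PQ.2.2 _ _ h⟩
  invFun P := (⟨P.1.comap Sum.inl, fun _ _ h => P.2 _ _ h⟩,
    ⟨P.1.comap Sum.inr, fun _ _ h => P.2 _ _ h⟩)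
  left_inv := by
    rintro ⟨⟨P, hP⟩, ⟨Q, hQ⟩⟩
    refine Prod.ext (Subtype.ext <| Setoid.ext fun _ _ => ⟨fun | .inl h => h, .inl⟩)
      (Subtype.ext <| Setoid.ext fun _ _ => ⟨fun | .inr h => h, .inr⟩)
  right_inv := by
    rintro ⟨P, hP⟩
    refine Subtype.ext <| Setoid.ext fun
      | .inl u, .inl v => ⟨fun | .inl h => h, fun h => .inl h⟩
      | .inr u, .inr v => ⟨fun | .inr h => h, fun h => .inr h⟩
      | .inl u, .inr v => ⟨nofun, fun h => (hP _ _ h trivial).elim⟩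
      | .inr u, .inl v => ⟨nofun, fun h => (hP _ _ h trivial).elim⟩

end SimpleGraph

theorem sigmaPoly_join {V W : Type*} [Finite V] [Finite W]
    (G : SimpleGraph V) (H : SimpleGraph W) :
    sigmaPoly (graphJoin G H) = sigmaPoly G * sigmaPoly H := by
  have := Fintype.ofFinite G.IndepSetoid
  have := Fintype.ofFinite H.IndepSetoid
  have := Fintype.ofFinite (graphJoin G H).IndepSetoid
  rw [G.sigmaPoly_eq_sum, H.sigmaPoly_eq_sum, (graphJoin G H).sigmaPoly_eq_sum,
    Finset.sum_mul_sum, ← Fintype.sum_prod_type', ← (G.joinIndepSetoidEquiv H).sum_comp]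
  refine Fintype.sum_congr _ _ fun PQ => ?_
  rw [← pow_add]
  exact congrArg (X ^ ·) (Setoid.card_quotient_sum PQ.1.1 PQ.2.1)
end

section
/- For every natural number m, the real polynomial x³ + (m+7)x² + (5m+12)x + (5m+4) has only real roots. -/
open Polynomial

/-! The cubic takes values of alternating sign at `-(m + 8) < -4 < -3/2 < 0`, so by the
intermediate value theorem it has a root in each of the three open intervals between them.
Three distinct roots of a polynomial of degree at most three are all of its roots. -/

theorem Polynomial.exists_root_mem_Ioo_of_eval_mul_eval_neg {p : ℝ[X]} {a b : ℝ} (hab : a < b)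
    (h : p.eval a * p.eval b < 0) : ∃ r ∈ Set.Ioo a b, p.IsRoot r := by
  have hp : ContinuousOn (fun x ↦ p.eval x) (Set.Icc a b) := p.continuousOn
  rcases mul_neg_iff.1 h with ⟨ha, hb⟩ | ⟨ha, hb⟩
  · exact intermediate_value_Ioo' hab.le hp ⟨hb, ha⟩
  · exact intermediate_value_Ioo hab.le hp ⟨ha, hb⟩

theorem Polynomial.splits_of_sign_alternates {p : ℝ[X]} {n : ℕ} (hdeg : p.natDegree ≤ n)
    {x : Fin (n + 1) → ℝ} (hx : StrictMono x)
    (hsign : ∀ i : Fin n, p.eval (x i.castSucc) * p.eval (x i.succ) < 0) : p.Splits := by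
  choose r hr hroot using fun i : Fin n ↦
    exists_root_mem_Ioo_of_eval_mul_eval_neg (hx i.castSucc_lt_succ) (hsign i)
  have hr_mono : StrictMono r := fun i j hij ↦
    calc r i < x i.succ := (hr i).2
      _ ≤ x j.castSucc := hx.monotone (Fin.succ_le_castSucc_iff.2 hij)
      _ < r j := (hr j).1
  rcases eq_or_ne p 0 with rfl | hp
  · exact Splits.zero
  have hcard : n ≤ p.roots.card :=
    calc n = (Finset.univ.image r).card := by
          rw [Finset.card_image_of_injective _ hr_mono.injective, Finset.card_univ, Fintype.card_fin]
      _ ≤ p.roots.toFinset.card := Finset.card_le_card fun y hy ↦ by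
          obtain ⟨i, -, rfl⟩ := Finset.mem_image.1 hy
          exact Multiset.mem_toFinset.2 ((mem_roots hp).2 (hroot i))
      _ ≤ p.roots.card := Multiset.toFinset_card_le _
  exact splits_iff_card_roots.2 (le_antisymm (card_roots' p) (hdeg.trans hcard))

theorem cubic_F2m_splits (m : ℕ) :
    (X ^ 3 + C ((m : ℝ) + 7) * X ^ 2 + C (5 * (m : ℝ) + 12) * X +
        C (5 * (m : ℝ) + 4)).Splits := by
  set p : ℝ[X] := X ^ 3 + C ((m : ℝ) + 7) * X ^ 2 + C (5 * (m : ℝ) + 12) * X + C (5 * (m : ℝ) + 4)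
  have heval (y : ℝ) :
      p.eval y = y ^ 3 + ((m : ℝ) + 7) * y ^ 2 + (5 * (m : ℝ) + 12) * y + (5 * (m : ℝ) + 4) := by
    simp [p]
  have hm : (0 : ℝ) ≤ m := m.cast_nonneg
  refine splits_of_sign_alternates (n := 3) (x := ![-((m : ℝ) + 8), -4, -3 / 2, 0])
    (by simp only [p]; compute_degree!) ?_ fun i ↦ ?_
  · refine Fin.strictMono_iff_lt_succ.2 fun i ↦ ?_
    fin_cases i
    · show -((m : ℝ) + 8) < -4
      linarith
    · show (-4 : ℝ) < -3 / 2
      norm_num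
    · show (-3 / 2 : ℝ) < 0
      norm_num
  fin_cases i
  · show p.eval (-((m : ℝ) + 8)) * p.eval (-4) < 0
    -- with `t = m + 8`, `p(-t) = -6t² + 33t - 36 < 0` for `t ≥ 8`
    rw [heval, heval]
    exact mul_neg_of_neg_of_pos (by nlinarith) (by linarith)
  · show p.eval (-4) * p.eval (-3 / 2) < 0
    rw [heval, heval]
    exact mul_neg_of_pos_of_neg (by linarith) (by linarith)
  · show p.eval (-3 / 2) * p.eval 0 < 0
    rw [heval, heval]
    exact mul_neg_of_neg_of_pos (by linarith) (by linarith)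
end

section
/- For every natural number m, the real polynomial x³ + (m+8)x² + (5m+16)x + (5m+7) has only real roots. -/
open Polynomial

/-!
A real polynomial of degree at most `n` that changes sign `n` times along an increasing
sequence of points has a root strictly between each consecutive pair of points, hence `n`
distinct real roots, and so splits. For the cubic it suffices to exhibit four such points.
-/

theorem Polynomial.splits_of_natDegree_le_card_of_isRoot {K : Type*} [Field K] {p : K[X]}
    (s : Finset K) (hs : ∀ x ∈ s, p.IsRoot x) (hdeg : p.natDegree ≤ s.card) : p.Splits := by
  obtain rfl | hp := eq_or_ne p 0
  · exact Splits.zero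
  have hsub : s.val ≤ p.roots :=
    (Multiset.le_iff_subset s.nodup).2 fun x hx => (mem_roots hp).2 (hs x hx)
  exact splits_iff_card_roots.2 <|
    le_antisymm p.card_roots' (hdeg.trans (Multiset.card_le_card hsub))

theorem Polynomial.exists_isRoot_mem_Ioo_of_eval_mul_neg {p : ℝ[X]} {a b : ℝ} (hab : a ≤ b)
    (h : p.eval a * p.eval b < 0) : ∃ r ∈ Set.Ioo a b, p.IsRoot r := by
  have hcont : ContinuousOn (fun x => p.eval x) (Set.Icc a b) := p.continuous.continuousOn
  rcases mul_neg_iff.1 h with ⟨ha, hb⟩ | ⟨ha, hb⟩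
  · exact intermediate_value_Ioo' hab hcont ⟨hb, ha⟩
  · exact intermediate_value_Ioo hab hcont ⟨ha, hb⟩

theorem Polynomial.splits_of_eval_mul_neg {p : ℝ[X]} {n : ℕ} (x : Fin (n + 1) → ℝ)
    (hx : StrictMono x) (hsign : ∀ i : Fin n, p.eval (x i.castSucc) * p.eval (x i.succ) < 0)
    (hdeg : p.natDegree ≤ n) : p.Splits := by
  choose r hr hroot using fun i : Fin n =>
    exists_isRoot_mem_Ioo_of_eval_mul_neg (hx.monotone (Fin.castSucc_le_succ i)) (hsign i)
  have hr_mono : StrictMono r := fun i j hij =>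
    calc r i < x i.succ := (hr i).2
      _ ≤ x j.castSucc := hx.monotone (Fin.succ_le_castSucc_iff.2 hij)
      _ < r j := (hr j).1
  refine splits_of_natDegree_le_card_of_isRoot (Finset.univ.image r) ?_ ?_
  · simpa using hroot
  · rwa [Finset.card_image_of_injective _ hr_mono.injective, Finset.card_univ, Fintype.card_fin]

theorem cubic_F3m_splits (m : ℕ) :
    (X ^ 3 + C ((m : ℝ) + 8) * X ^ 2 + C (5 * (m : ℝ) + 16) * X +
        C (5 * (m : ℝ) + 7)).Splits := by
  have hm : (0 : ℝ) ≤ m := m.cast_nonneg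
  -- The values at these points are `-(6m² + 74m + 218)`, `5m + 2`, `-(m + 1)`, `(22m + 7)/8`.
  refine splits_of_eval_mul_neg ![-(m + 9), -5, -2, -1 / 2] ?_ ?_ (by compute_degree!)
  · refine Fin.strictMono_iff_lt_succ.2 fun i => ?_
    fin_cases i <;> simp <;> linarith
  · intro i
    fin_cases i <;> simp <;> nlinarith [pow_nonneg hm 2, pow_nonneg hm 3]
end

section
/- Let α and β be real numbers with α ≥ 1 and β ≥ 1, and set D₁ = (α+β+1)² − 4αβ and D₂ = (α+β)² − 4(α−1)β. Then D₁ ≥ 0, D₂ ≥ 0, and the following chain of inequalities holds: 0 ≥ (−(α+β) + √D₂)/2 ≥ (−(α+β+1) + √D₁)/2 ≥ (−(α+β) − √D₂)/2 ≥ (−(α+β+1) − √D₁)/2. (Consequently the roots of x² + (α+β)x + (α−1)β interlace the nonzero roots of x³ + (α+β+1)x² + αβx.) -/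
theorem roots_interlace (α β : ℝ) (hα : 1 ≤ α) (hβ : 1 ≤ β) :
    0 ≤ (α + β + 1) ^ 2 - 4 * α * β ∧
    0 ≤ (α + β) ^ 2 - 4 * (α - 1) * β ∧
    (-(α + β) + Real.sqrt ((α + β) ^ 2 - 4 * (α - 1) * β)) / 2 ≤ 0 ∧
    (-(α + β + 1) + Real.sqrt ((α + β + 1) ^ 2 - 4 * α * β)) / 2 ≤
      (-(α + β) + Real.sqrt ((α + β) ^ 2 - 4 * (α - 1) * β)) / 2 ∧
    (-(α + β) - Real.sqrt ((α + β) ^ 2 - 4 * (α - 1) * β)) / 2 ≤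
      (-(α + β + 1) + Real.sqrt ((α + β + 1) ^ 2 - 4 * α * β)) / 2 ∧
    (-(α + β + 1) - Real.sqrt ((α + β + 1) ^ 2 - 4 * α * β)) / 2 ≤
      (-(α + β) - Real.sqrt ((α + β) ^ 2 - 4 * (α - 1) * β)) / 2 := by
  have hD1 : (0:ℝ) ≤ (α + β + 1) ^ 2 - 4 * α * β := by nlinarith [sq_nonneg (α - β)]
  have hD2 : (0:ℝ) ≤ (α + β) ^ 2 - 4 * (α - 1) * β := by nlinarith [sq_nonneg (α - β)]
  set D1 := (α + β + 1) ^ 2 - 4 * α * β with hD1def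
  set D2 := (α + β) ^ 2 - 4 * (α - 1) * β with hD2def
  have hsq1 : Real.sqrt D1 ^ 2 = D1 := Real.sq_sqrt hD1
  have hsq2 : Real.sqrt D2 ^ 2 = D2 := Real.sq_sqrt hD2
  have h1nn := Real.sqrt_nonneg D1
  have h2nn := Real.sqrt_nonneg D2
  -- √D2 ≤ α + β
  have key0 : Real.sqrt D2 ≤ α + β := by
    have h := Real.sqrt_le_sqrt (show D2 ≤ (α + β) ^ 2 by nlinarith)
    rwa [Real.sqrt_sq (by linarith)] at h
  -- α - β ≤ √D2
  have key2 : α - β ≤ Real.sqrt D2 := by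
    have h : |α - β| ≤ Real.sqrt D2 := by
      rw [← Real.sqrt_sq_eq_abs]
      exact Real.sqrt_le_sqrt (by nlinarith)
    exact le_trans (le_abs_self _) h
  -- β - α - 1 ≤ √D1
  have key4 : β - α - 1 ≤ Real.sqrt D1 := by
    have h : |β - α - 1| ≤ Real.sqrt D1 := by
      rw [← Real.sqrt_sq_eq_abs]
      exact Real.sqrt_le_sqrt (by nlinarith)
    exact le_trans (le_abs_self _) h
  -- 1 ≤ √D1
  have key3 : (1:ℝ) ≤ Real.sqrt D1 := by
    have h := Real.sqrt_le_sqrt (show (1:ℝ) ≤ D1 by nlinarith [sq_nonneg (α - β)])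
    rwa [Real.sqrt_one] at h
  -- √D1 ≤ √D2 + 1
  have keyb : Real.sqrt D1 ≤ Real.sqrt D2 + 1 := by
    have h : D1 ≤ (Real.sqrt D2 + 1) ^ 2 := by nlinarith
    have h2 := Real.sqrt_le_sqrt h
    rwa [Real.sqrt_sq (by linarith)] at h2
  -- √D2 ≤ √D1 + 1
  have keyd : Real.sqrt D2 ≤ Real.sqrt D1 + 1 := by
    have h : D2 ≤ (Real.sqrt D1 + 1) ^ 2 := by nlinarith
    have h2 := Real.sqrt_le_sqrt h
    rwa [Real.sqrt_sq (by linarith)] at h2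
  refine ⟨hD1, hD2, by linarith, by linarith, by linarith, by linarith⟩
end
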